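/- arXiv:2003.11579 — 7 statements merged into one kernel-verified Lean document; each statement's English description precedes it below -/
import Mathlib

section
/- Let γ > 0, δ > 0, g(y) = cos y - (γ/δ) sin y, and y₀ = arctan(δ/γ). Then ∫₀^π e^{-γy/δ} |g(y)| dy = 2 sin(y₀) e^{-γ y₀/δ}. -/
open MeasureTheory Real

theorem stmt_4 (γ δ : ℝ) (hγ : 0 < γ) (hδ : 0 < δ) (y₀ : ℝ)
    (hy₀ : y₀ = Real.arctan (δ/γ)) :
    ∫ y in (0:ℝ)..Real.pi, Real.exp (-γ*y/δ) * |Real.cos y - (γ/δ) * Real.sin y| =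
      2 * Real.sin y₀ * Real.exp (-γ*y₀/δ) := by
  set c : ℝ := γ/δ with hc
  have hcpos : 0 < c := div_pos hγ hδ
  have hy₀pos : 0 < y₀ := by rw [hy₀, ← Real.arctan_zero]; exact Real.arctan_strictMono (div_pos hδ hγ)
  have hy₀lt : y₀ < Real.pi/2 := hy₀ ▸ Real.arctan_lt_pi_div_two _
  have hy₀ltpi : y₀ < Real.pi := hy₀lt.trans (by linarith [Real.pi_pos])
  have hsin0 : 0 < Real.sin y₀ := Real.sin_pos_of_pos_of_lt_pi hy₀pos hy₀ltpi
  have hcosy₀pos : 0 < Real.cos y₀ :=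
    Real.cos_pos_of_mem_Ioo ⟨by linarith [Real.pi_pos], hy₀lt⟩
  have htan : Real.tan y₀ = δ/γ := by rw [hy₀, Real.tan_arctan]
  have hcos0 : Real.cos y₀ = c * Real.sin y₀ := by
    rw [Real.tan_eq_sin_div_cos] at htan
    have : Real.sin y₀ = (δ/γ) * Real.cos y₀ := by
      field_simp at htan ⊢; nlinarith [htan]
    rw [this, hc]; field_simp
  have hident : ∀ y, Real.sin (y₀ - y) = Real.sin y₀ * (Real.cos y - c * Real.sin y) := by
    intro y; rw [Real.sin_sub, hcos0]; ring
  -- antiderivative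
  have hF : ∀ y : ℝ, HasDerivAt (fun y => Real.exp (-c*y) * Real.sin y)
      (Real.exp (-c*y) * (Real.cos y - c * Real.sin y)) y := by
    intro y
    have h1 : HasDerivAt (fun y : ℝ => -c*y) (-c) y := by
      simpa using (hasDerivAt_id y).const_mul (-c)
    have h2 := (h1.exp).fun_mul (Real.hasDerivAt_sin y)
    exact h2.congr_deriv (by ring)
  have hcont : Continuous (fun y => Real.exp (-c*y) * (Real.cos y - c * Real.sin y)) := by
    fun_prop
  have hI1 : ∫ y in (0:ℝ)..y₀, Real.exp (-c*y) * (Real.cos y - c * Real.sin y)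
      = Real.exp (-c*y₀) * Real.sin y₀ := by
    rw [intervalIntegral.integral_eq_sub_of_hasDerivAt (fun y _ => hF y)
      (hcont.intervalIntegrable _ _)]
    simp
  have hI2 : ∫ y in y₀..Real.pi, Real.exp (-c*y) * (Real.cos y - c * Real.sin y)
      = -(Real.exp (-c*y₀) * Real.sin y₀) := by
    rw [intervalIntegral.integral_eq_sub_of_hasDerivAt (fun y _ => hF y)
      (hcont.intervalIntegrable _ _)]
    simp
  have habs : Continuous (fun y => Real.exp (-c*y) * |Real.cos y - c * Real.sin y|) := by
    fun_prop
  have hsplit : ∫ y in (0:ℝ)..Real.pi, Real.exp (-c*y) * |Real.cos y - c * Real.sin y|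
      = (∫ y in (0:ℝ)..y₀, Real.exp (-c*y) * |Real.cos y - c * Real.sin y|)
        + ∫ y in y₀..Real.pi, Real.exp (-c*y) * |Real.cos y - c * Real.sin y| :=
    (intervalIntegral.integral_add_adjacent_intervals
      (habs.intervalIntegrable _ _) (habs.intervalIntegrable _ _)).symm
  have hpos : ∀ y ∈ Set.uIcc (0:ℝ) y₀,
      Real.exp (-c*y) * |Real.cos y - c * Real.sin y|
        = Real.exp (-c*y) * (Real.cos y - c * Real.sin y) := by
    intro y hy
    rw [Set.uIcc_of_le hy₀pos.le] at hy
    have hs : 0 ≤ Real.sin (y₀ - y) :=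
      Real.sin_nonneg_of_nonneg_of_le_pi (by linarith [hy.2]) (by linarith [hy.1, hy₀ltpi])
    have := hident y
    have hg : 0 ≤ Real.cos y - c * Real.sin y := by nlinarith
    rw [abs_of_nonneg hg]
  have hneg : ∀ y ∈ Set.uIcc y₀ Real.pi,
      Real.exp (-c*y) * |Real.cos y - c * Real.sin y|
        = -(Real.exp (-c*y) * (Real.cos y - c * Real.sin y)) := by
    intro y hy
    rw [Set.uIcc_of_le hy₀ltpi.le] at hy
    have hs : Real.sin (y₀ - y) ≤ 0 := by
      have := Real.sin_nonneg_of_nonneg_of_le_pi (show (0:ℝ) ≤ y - y₀ by linarith [hy.1])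
        (show y - y₀ ≤ Real.pi by linarith [hy.2, hy₀pos])
      rw [show y₀ - y = -(y - y₀) by ring, Real.sin_neg]; linarith
    have := hident y
    have hg : Real.cos y - c * Real.sin y ≤ 0 := by nlinarith
    rw [abs_of_nonpos hg]; ring
  have hmain : ∫ y in (0:ℝ)..Real.pi, Real.exp (-c*y) * |Real.cos y - c * Real.sin y|
      = 2 * Real.sin y₀ * Real.exp (-c*y₀) := by
    rw [hsplit, intervalIntegral.integral_congr hpos, intervalIntegral.integral_congr hneg,
      intervalIntegral.integral_neg, hI1, hI2]
    ring
  have heq : ∀ y : ℝ, Real.exp (-γ*y/δ) = Real.exp (-c*y) := by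
    intro y; rw [hc]; ring_nf
  calc ∫ y in (0:ℝ)..Real.pi, Real.exp (-γ*y/δ) * |Real.cos y - (γ/δ) * Real.sin y|
      = ∫ y in (0:ℝ)..Real.pi, Real.exp (-c*y) * |Real.cos y - c * Real.sin y| := by
        refine intervalIntegral.integral_congr fun y _ => ?_
        rw [heq y, hc]
    _ = 2 * Real.sin y₀ * Real.exp (-c*y₀) := hmain
    _ = 2 * Real.sin y₀ * Real.exp (-γ*y₀/δ) := by rw [heq y₀]
end

section
/- The function f₁(x) = (1/x)·log((1-x)/(1+x)) - log(1-x²) is strictly increasing on the interval (0,1). -/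
open Real

lemma key_ineq {x : ℝ} (hx : x ∈ Set.Ioo (0:ℝ) 1) :
    2*x < Real.log (1+x) - Real.log (1-x) := by
  obtain ⟨hx0, hx1⟩ := hx
  have H : StrictMonoOn (fun y : ℝ => Real.log (1+y) - Real.log (1-y) - 2*y)
      (Set.Ico 0 1) := by
    apply strictMonoOn_of_deriv_pos (convex_Ico 0 1)
    · apply ContinuousOn.sub
      · apply ContinuousOn.sub
        · exact (continuousOn_const.add continuousOn_id).log
            (fun y hy => by have := hy.1; have := hy.2; intro h; simp only [Pi.add_apply, id] at h; linarith)
        · exact (continuousOn_const.sub continuousOn_id).log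
            (fun y hy => by have := hy.1; have := hy.2; intro h; simp only [Pi.sub_apply, id] at h; linarith)
      · exact continuousOn_const.mul continuousOn_id
    · intro y hy
      rw [interior_Ico] at hy
      obtain ⟨hy0, hy1⟩ := hy
      have h1 : (1:ℝ)+y ≠ 0 := by linarith
      have h2 : (1:ℝ)-y ≠ 0 := by linarith
      have d1 : HasDerivAt (fun y : ℝ => 1+y) 1 y := by
        simpa using (hasDerivAt_id y).const_add 1
      have d2 : HasDerivAt (fun y : ℝ => 1-y) (-1) y := by
        simpa using (hasDerivAt_id y).const_sub 1
      have d3 : HasDerivAt (fun y : ℝ => 2*y) 2 y := by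
        simpa using (hasDerivAt_id y).const_mul 2
      have hd : HasDerivAt (fun y : ℝ => Real.log (1+y) - Real.log (1-y) - 2*y)
          (1/(1+y) - (-1)/(1-y) - 2) y := ((d1.log h1).sub (d2.log h2)).sub d3
      rw [hd.deriv]
      have heq : 1/(1+y) - (-1)/(1-y) - 2 = 2*y^2/((1+y)*(1-y)) := by
        field_simp; ring
      rw [heq]
      apply div_pos (by positivity) (by nlinarith)
  have h0 : (0:ℝ) ∈ Set.Ico (0:ℝ) 1 := ⟨le_refl 0, by norm_num⟩
  have hxm : x ∈ Set.Ico (0:ℝ) 1 := ⟨le_of_lt hx0, hx1⟩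
  have := H h0 hxm hx0
  simp at this
  linarith

theorem stmt_5 :
    StrictMonoOn (fun x : ℝ => (1/x) * Real.log ((1-x)/(1+x)) - Real.log (1-x^2))
      (Set.Ioo 0 1) := by
  apply strictMonoOn_of_deriv_pos (convex_Ioo 0 1)
  · apply ContinuousOn.sub
    · apply ContinuousOn.mul
      · exact continuousOn_const.div continuousOn_id (fun x hx => ne_of_gt hx.1)
      · apply ContinuousOn.log
        · exact (continuousOn_const.sub continuousOn_id).div
            (continuousOn_const.add continuousOn_id)
            (fun x hx => by have := hx.1; have := hx.2; intro h; linarith)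
        · intro x hx
          have h1 : (0:ℝ) < 1 - x := by have := hx.2; linarith
          have h2 : (0:ℝ) < 1 + x := by have := hx.1; linarith
          exact ne_of_gt (div_pos h1 h2)
    · apply ContinuousOn.log
      · exact continuousOn_const.sub (continuousOn_pow 2)
      · intro x hx
        have := hx.1; have := hx.2
        intro h; nlinarith
  · intro x hx
    rw [interior_Ioo] at hx
    obtain ⟨hx0, hx1⟩ := hx
    have hxne : x ≠ 0 := ne_of_gt hx0
    have h1 : (0:ℝ) < 1 + x := by linarith
    have h2 : (0:ℝ) < 1 - x := by linarith
    have h3 : (1:ℝ) - x^2 ≠ 0 := by nlinarith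
    have hq : ((1-x)/(1+x)) ≠ 0 := ne_of_gt (div_pos h2 h1)
    have dq : HasDerivAt (fun x : ℝ => (1-x)/(1+x))
        (((-1)*(1+x) - (1-x)*1)/(1+x)^2) x := by
      have d2 : HasDerivAt (fun x : ℝ => 1-x) (-1) x := by
        simpa using (hasDerivAt_id x).const_sub 1
      have d1 : HasDerivAt (fun x : ℝ => 1+x) 1 x := by
        simpa using (hasDerivAt_id x).const_add 1
      exact d2.div d1 (ne_of_gt h1)
    have dlog1 := dq.log hq
    have dinv : HasDerivAt (fun x : ℝ => 1/x) (-(1/x^2)) x := by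
      simpa [one_div] using hasDerivAt_inv hxne
    have dprod := dinv.mul dlog1
    have dsq : HasDerivAt (fun x : ℝ => 1 - x^2) (-(2*x)) x := by
      have := (hasDerivAt_pow 2 x).const_sub 1
      simpa using this
    have dlog2 := dsq.log h3
    have total : HasDerivAt (fun x : ℝ => (1/x) * Real.log ((1-x)/(1+x)) - Real.log (1-x^2)) _ x :=
      dprod.sub dlog2
    rw [total.deriv]
    have hlog : Real.log ((1-x)/(1+x)) = Real.log (1-x) - Real.log (1+x) :=
      Real.log_div (ne_of_gt h2) (ne_of_gt h1)
    have key := key_ineq ⟨hx0, hx1⟩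
    have heq : -(1/x^2) * Real.log ((1-x)/(1+x)) +
        1/x * ((((-1)*(1+x) - (1-x)*1)/(1+x)^2) / ((1-x)/(1+x))) - (-(2*x)) / (1-x^2)
        = (Real.log (1+x) - Real.log (1-x) - 2*x)/x^2 := by
      rw [hlog]
      have h2' : (1:ℝ) - x ≠ 0 := ne_of_gt h2
      have h1' : (1:ℝ) + x ≠ 0 := ne_of_gt h1
      field_simp
      ring
    rw [heq]
    apply div_pos (by linarith) (by positivity)
end

section
/- The function f₂(x) = (1/x)·log((1-x)/(1+x)) is strictly decreasing on the interval (0,1). -/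
open Real

lemma stmt_7_key (x : ℝ) (hx0 : 0 < x) (hx1 : x < 1) :
    Real.log ((1-x)/(1+x)) > -(2*x/((1-x)*(1+x))) := by
  set g : ℝ → ℝ := fun y => Real.log ((1-y)/(1+y)) + 2*y/((1-y)*(1+y)) with hg
  have hmono : StrictMonoOn g (Set.Ico 0 1) := by
    apply strictMonoOn_of_deriv_pos (convex_Ico 0 1)
    · apply ContinuousOn.add
      · apply ContinuousOn.log
        · apply ContinuousOn.div (by fun_prop) (by fun_prop)
          intro y hy
          have : (0:ℝ) < 1 + y := by linarith [hy.1]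
          linarith
        · intro y hy
          have h1 : (0:ℝ) < 1 - y := by linarith [hy.2]
          have h2 : (0:ℝ) < 1 + y := by linarith [hy.1]
          positivity
      · apply ContinuousOn.div (by fun_prop) (by fun_prop)
        intro y hy
        have h1 : (0:ℝ) < 1 - y := by linarith [hy.2]
        have h2 : (0:ℝ) < 1 + y := by linarith [hy.1]
        positivity
    · intro y hy
      rw [interior_Ico] at hy
      obtain ⟨hy0, hy1⟩ := hy
      have h1 : (0:ℝ) < 1 - y := by linarith
      have h2 : (0:ℝ) < 1 + y := by linarith
      have hD : (0:ℝ) < (1-y)*(1+y) := mul_pos h1 h2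
      have hq : HasDerivAt (fun z : ℝ => (1-z)/(1+z)) ((-2)/(1+y)^2) y := by
        have := ((hasDerivAt_id y).const_sub 1).div ((hasDerivAt_id y).const_add 1) h2.ne'
        refine this.congr_deriv ?_
        simp only [id]
        ring
      have hqpos : (0:ℝ) < (1-y)/(1+y) := by positivity
      have hlog : HasDerivAt (fun z : ℝ => Real.log ((1-z)/(1+z)))
          ((-2)/(1+y)^2 / ((1-y)/(1+y))) y := hq.log hqpos.ne'
      have hden : HasDerivAt (fun z : ℝ => (1-z)*(1+z)) (-(2*y)) y := by
        have := ((hasDerivAt_id y).const_sub 1).mul ((hasDerivAt_id y).const_add 1)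
        refine this.congr_deriv ?_
        simp only [id]
        ring
      have hnum : HasDerivAt (fun z : ℝ => 2*z) 2 y := by
        simpa using (hasDerivAt_id y).const_mul 2
      have hfrac : HasDerivAt (fun z : ℝ => 2*z/((1-z)*(1+z)))
          ((2*((1-y)*(1+y)) - 2*y*(-(2*y)))/((1-y)*(1+y))^2) y := hnum.div hden hD.ne'
      have hgd : HasDerivAt g
          ((-2)/(1+y)^2 / ((1-y)/(1+y)) + (2*((1-y)*(1+y)) - 2*y*(-(2*y)))/((1-y)*(1+y))^2) y :=
        hlog.add hfrac
      rw [hgd.deriv]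
      have : (-2)/(1+y)^2 / ((1-y)/(1+y)) + (2*((1-y)*(1+y)) - 2*y*(-(2*y)))/((1-y)*(1+y))^2
          = 4*y^2/((1-y)*(1+y))^2 := by
        field_simp
        ring
      rw [this]
      positivity
  have h0 : g 0 = 0 := by simp [hg]
  have := hmono (Set.mem_Ico.mpr ⟨le_refl 0, by norm_num⟩)
      (Set.mem_Ico.mpr ⟨hx0.le, hx1⟩) hx0
  rw [h0] at this
  simp only [hg] at this
  linarith

theorem stmt_7 :
    StrictAntiOn (fun x : ℝ => (1/x) * Real.log ((1-x)/(1+x))) (Set.Ioo 0 1) := by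
  apply strictAntiOn_of_deriv_neg (convex_Ioo 0 1)
  · apply ContinuousOn.mul
    · exact ContinuousOn.div continuousOn_const continuousOn_id (fun x hx => ne_of_gt hx.1)
    · apply ContinuousOn.log
      · apply ContinuousOn.div (by fun_prop) (by fun_prop)
        intro x hx
        have : (0:ℝ) < 1 + x := by linarith [hx.1]
        linarith
      · intro x hx
        have h1 : (0:ℝ) < 1 - x := by linarith [hx.2]
        have h2 : (0:ℝ) < 1 + x := by linarith [hx.1]
        positivity
  · intro x hx
    rw [interior_Ioo] at hx
    obtain ⟨hx0, hx1⟩ := hx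
    have h1 : (0:ℝ) < 1 - x := by linarith
    have h2 : (0:ℝ) < 1 + x := by linarith
    have hq : HasDerivAt (fun x : ℝ => (1-x)/(1+x)) ((-2)/(1+x)^2) x := by
      have := ((hasDerivAt_id x).const_sub 1).div ((hasDerivAt_id x).const_add 1) h2.ne'
      refine this.congr_deriv ?_
      simp only [id]
      ring
    have hqpos : (0:ℝ) < (1-x)/(1+x) := by positivity
    have hlog : HasDerivAt (fun x : ℝ => Real.log ((1-x)/(1+x)))
        ((-2)/(1+x)^2 / ((1-x)/(1+x))) x := hq.log hqpos.ne'
    have hinv : HasDerivAt (fun x : ℝ => 1/x) (-(1/x^2)) x := by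
      simpa using (hasDerivAt_inv hx0.ne')
    have hf : HasDerivAt (fun x : ℝ => (1/x) * Real.log ((1-x)/(1+x)))
        ((-(1/x^2)) * Real.log ((1-x)/(1+x)) + (1/x) * ((-2)/(1+x)^2 / ((1-x)/(1+x)))) x :=
      hinv.mul hlog
    rw [hf.deriv]
    have hkey := stmt_7_key x hx0 hx1
    have hd : (-2)/(1+x)^2 / ((1-x)/(1+x)) = -(2/((1-x)*(1+x))) := by
      field_simp
    rw [hd]
    set L := Real.log ((1-x)/(1+x)) with hLdef
    have hDpos : (0:ℝ) < (1-x)*(1+x) := mul_pos h1 h2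
    have h5 : -(2*x) < L * ((1-x)*(1+x)) :=
      (div_lt_iff₀ hDpos).mp (by rw [neg_div]; exact hkey)
    have e1 : -(1/x^2) * L + (1/x) * (-(2/((1-x)*(1+x))))
        = (-(L*((1-x)*(1+x))) - 2*x) / (x^2*((1-x)*(1+x))) := by
      field_simp
      ring
    rw [e1]
    apply div_neg_of_neg_of_pos
    · linarith
    · positivity
end

section
/- The function g₂(x) = 2x/(x²-1) - log((1-x)/(1+x)) is strictly negative on the interval (0,1). -/
open Real

theorem stmt_8 (x : ℝ) (hx : x ∈ Set.Ioo (0:ℝ) 1) :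
    2*x/(x^2-1) - Real.log ((1-x)/(1+x)) < 0 := by
  obtain ⟨hx0, hx1⟩ := hx
  set u : ℝ := (1-x)/(1+x) with hu
  have h1x : (0:ℝ) < 1 + x := by linarith
  have h1x' : (0:ℝ) < 1 - x := by linarith
  have hu0 : 0 < u := div_pos h1x' h1x
  have hu1 : u < 1 := by
    rw [hu, div_lt_one h1x]; linarith
  have hlog : Real.log u < 0 := Real.log_neg hu0 hu1
  set s : ℝ := -Real.log u with hs
  have hs0 : 0 < s := by simp [hs]; linarith
  have hexp : Real.exp (-s) = u := by
    rw [hs, neg_neg, Real.exp_log hu0]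
  have hexps : Real.exp s = 1/u := by
    rw [show s = -(-s) by ring, Real.exp_neg, hexp, one_div]
  have hsinh : Real.sinh s = (1/u - u)/2 := by
    rw [Real.sinh_eq, hexps, hexp]
  have hlt : s < Real.sinh s := Real.self_lt_sinh_iff.mpr hs0
  have key : 2*x/(x^2-1) = (u - 1/u)/2 := by
    rw [hu]
    have hne1 : (1+x) ≠ 0 := ne_of_gt h1x
    have hne2 : (1-x) ≠ 0 := ne_of_gt h1x'
    have hne3 : x^2 - 1 ≠ 0 := by nlinarith
    field_simp
    ring
  have : Real.log u = -s := by rw [hs]; ring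
  rw [this, key]
  rw [hsinh] at hlt
  linarith
end

section
/- For every x > 0 one has (e^{π/x} - 1)·(x - arctan x) > π. -/
open Real

private lemma taylor5 (t : ℝ) (ht : 0 ≤ t) :
    1 + t + t^2/2 + t^3/6 + t^4/24 + t^5/120 ≤ Real.exp t := by
  have h := Real.sum_le_exp_of_nonneg ht 6
  have e : ∑ i ∈ Finset.range 6, t ^ i / (Nat.factorial i) =
      1 + t + t^2/2 + t^3/6 + t^4/24 + t^5/120 := by
    norm_num [Finset.sum_range_succ, Nat.factorial]
  linarith [e ▸ h]

private lemma arctan_upper (x : ℝ) (hx : 0 ≤ x) :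
    Real.arctan x ≤ x - 5*x^3/(15+9*x^2) := by
  have hder : ∀ y : ℝ, HasDerivAt (fun z => z - Real.arctan z - 5*z^3/(15+9*z^2))
      (1 - 1/(1+y^2) - (15*y^2*(15+9*y^2) - 5*y^3*(18*y))/(15+9*y^2)^2) y := by
    intro y
    have h1 : HasDerivAt (fun z : ℝ => z) 1 y := hasDerivAt_id y
    have h2 := Real.hasDerivAt_arctan y
    have hnum : HasDerivAt (fun z : ℝ => 5*z^3) (15*y^2) y := by
      have := (hasDerivAt_pow 3 y).const_mul (5:ℝ)
      exact this.congr_deriv (by ring)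
    have hden : HasDerivAt (fun z : ℝ => 15+9*z^2) (18*y) y := by
      have := ((hasDerivAt_pow 2 y).const_mul (9:ℝ)).const_add (15:ℝ)
      exact this.congr_deriv (by ring)
    have hd0 : (15+9*y^2 : ℝ) ≠ 0 := by positivity
    exact (h1.sub h2).sub (hnum.div hden hd0)
  have hmono : Monotone (fun z => z - Real.arctan z - 5*z^3/(15+9*z^2)) := by
    apply monotone_of_deriv_nonneg (fun y => (hder y).differentiableAt)
    intro y
    rw [(hder y).deriv]
    have h1 : (0:ℝ) < 1 + y^2 := by positivity
    have h2 : (0:ℝ) < 15 + 9*y^2 := by positivity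
    have e1 : 1 - 1/(1+y^2) - (15*y^2*(15+9*y^2) - 5*y^3*(18*y))/(15+9*y^2)^2
        = (y^2*(15+9*y^2)^2 - (225*y^2+45*y^4)*(1+y^2))/((1+y^2)*(15+9*y^2)^2) := by
      field_simp
      ring
    rw [e1]
    apply div_nonneg _ (by positivity)
    nlinarith [sq_nonneg y, sq_nonneg (y^2), pow_nonneg (sq_nonneg y) 2]
  have h0 := hmono hx
  simp only at h0
  have : (0:ℝ) - Real.arctan 0 - 5*0^3/(15+9*0^2) = 0 := by norm_num
  rw [this] at h0
  linarith
private lemma arctan_lower (x : ℝ) (hx : 0 ≤ x) :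
    3*x/(3+x^2) ≤ Real.arctan x := by
  have hder : ∀ y : ℝ, HasDerivAt (fun z => Real.arctan z - 3*z/(3+z^2))
      (1/(1+y^2) - (3*(3+y^2) - 3*y*(2*y))/(3+y^2)^2) y := by
    intro y
    have h2 := Real.hasDerivAt_arctan y
    have hnum : HasDerivAt (fun z : ℝ => 3*z) 3 y := by
      simpa using (hasDerivAt_id y).const_mul (3:ℝ)
    have hden : HasDerivAt (fun z : ℝ => 3+z^2) (2*y) y := by
      have := (hasDerivAt_pow 2 y).const_add (3:ℝ)
      exact this.congr_deriv (by ring)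
    have hd0 : (3+y^2 : ℝ) ≠ 0 := by positivity
    exact h2.sub (hnum.div hden hd0)
  have hmono : Monotone (fun z => Real.arctan z - 3*z/(3+z^2)) := by
    apply monotone_of_deriv_nonneg (fun y => (hder y).differentiableAt)
    intro y
    rw [(hder y).deriv]
    have h1 : (0:ℝ) < 1 + y^2 := by positivity
    have h2 : (0:ℝ) < 3 + y^2 := by positivity
    have e1 : 1/(1+y^2) - (3*(3+y^2) - 3*y*(2*y))/(3+y^2)^2
        = ((3+y^2)^2 - (9-3*y^2)*(1+y^2))/((1+y^2)*(3+y^2)^2) := by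
      field_simp
      ring
    rw [e1]
    apply div_nonneg _ (by positivity)
    nlinarith [pow_nonneg (sq_nonneg y) 2]
  have h0 := hmono hx
  simp only at h0
  have : Real.arctan 0 - 3*0/(3+0^2) = 0 := by norm_num
  rw [this] at h0
  linarith

private lemma poly_small (x : ℝ) (hx : 0 < x) (hle : x ≤ 5/4) :
    Real.pi * (24*(x^2*(15+9*x^2))) <
      (120*x^4 + 60*Real.pi*x^3 + 20*Real.pi^2*x^2 + 5*Real.pi^3*x + Real.pi^4) * Real.pi := by
  have hπ1 : 3.1415 < Real.pi := Real.pi_gt_d4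
  have hp2 : (9.86:ℝ) < Real.pi^2 := by nlinarith
  have hp3 : (31:ℝ) < Real.pi^3 := by nlinarith [Real.pi_pos, hp2]
  have hp4 : (97:ℝ) < Real.pi^4 := by nlinarith [hp2]
  have hx3 : (0:ℝ) ≤ x^3 := by positivity
  have hx2 : (0:ℝ) ≤ x^2 := by positivity
  have b1 : 60*3.1415*x^3 ≤ 60*Real.pi*x^3 := by nlinarith [hπ1, hx3]
  have b2 : 20*9.86*x^2 ≤ 20*Real.pi^2*x^2 := by nlinarith [hp2, hx2]
  have b3 : 5*31*x ≤ 5*Real.pi^3*x := by nlinarith [hp3, hx.le]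
  have hA : 24*(x^2*(15+9*x^2)) < 120*x^4 + 60*Real.pi*x^3
      + 20*Real.pi^2*x^2 + 5*Real.pi^3*x + Real.pi^4 := by
    nlinarith [b1, b2, b3, hp4, hx.le, hle,
      mul_nonneg (mul_nonneg (mul_nonneg hx.le hx.le) hx.le) (sub_nonneg.2 hle),
      mul_nonneg hx.le (sub_nonneg.2 hle)]
  have := mul_lt_mul_of_pos_left hA Real.pi_pos
  linarith

private lemma key_exp (t : ℝ) (ht : 0 < t) :
    12*t < (Real.exp t - 1) * (12 - 6*t + t^2) := by
  have hexp := taylor5 t ht.le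
  nlinarith [hexp, mul_pos (mul_pos (mul_pos (mul_pos ht ht) ht) ht) ht,
    sq_nonneg (t-1), mul_pos ht ht, sq_nonneg (t-3)]

private lemma arctan_lb (u : ℝ) (hu : 0 < u) (hub : u < 4/5) :
    Real.pi^2 * u / 12 < Real.arctan u := by
  have hl := arctan_lower u hu.le
  have hπ2 : Real.pi < 3.1416 := Real.pi_lt_d4
  have hp2 : Real.pi^2 < 9.8697 := by nlinarith [Real.pi_pos]
  have hb : Real.pi^2*(3+u^2) < 36 := by
    nlinarith [hp2, mul_pos (sub_pos.2 hub) (show (0:ℝ) < 4/5 + u by linarith),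
      Real.pi_pos, mul_pos hu hu]
  have h3 : Real.pi^2 * u / 12 < 3*u/(3+u^2) := by
    rw [div_lt_div_iff₀ (by norm_num) (by positivity)]
    nlinarith [mul_lt_mul_of_pos_left hb hu]
  linarith

theorem stmt_9 (x : ℝ) (hx : 0 < x) :
    (Real.exp (Real.pi/x) - 1) * (x - Real.arctan x) > Real.pi := by
  have ht : 0 < Real.pi / x := by positivity
  rcases le_or_gt x (5/4) with hle | hgt
  · -- small x branch
    have hexp := taylor5 (Real.pi/x) ht.le
    have hQ : 5*x^3/(15+9*x^2) ≤ x - Real.arctan x := by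
      have := arctan_upper x hx.le
      linarith
    have hden : (0:ℝ) < 15 + 9*x^2 := by positivity
    have hQpos : 0 < 5*x^3/(15+9*x^2) := by positivity
    set t := Real.pi / x with htdef
    have hS : (0:ℝ) < t + t^2/2 + t^3/6 + t^4/24 + t^5/120 := by positivity
    have h1 : (t + t^2/2 + t^3/6 + t^4/24 + t^5/120) * (5*x^3/(15+9*x^2))
        ≤ (Real.exp t - 1) * (x - Real.arctan x) :=
      mul_le_mul (by linarith) hQ hQpos.le (by linarith)
    have h2 : Real.pi < (t + t^2/2 + t^3/6 + t^4/24 + t^5/120) * (5*x^3/(15+9*x^2)) := by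
      have hxne : x ≠ 0 := hx.ne'
      have e1 : (t + t^2/2 + t^3/6 + t^4/24 + t^5/120) * (5*x^3/(15+9*x^2))
          = (120*x^4 + 60*Real.pi*x^3 + 20*Real.pi^2*x^2 + 5*Real.pi^3*x + Real.pi^4)
            * Real.pi / (24*(x^2*(15+9*x^2))) := by
        rw [htdef]
        field_simp
        ring
      rw [e1, lt_div_iff₀ (by positivity)]
      exact poly_small x hx hle
    linarith
  · -- large x branch
    set t := Real.pi / x with htdef
    have hkey := key_exp t ht
    have hu : (0:ℝ) < x⁻¹ := by positivity
    have hub : x⁻¹ < 4/5 := by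
      rw [inv_lt_comm₀ hx (by norm_num)]
      linarith [Real.pi_gt_three]
    have harc := arctan_lb x⁻¹ hu hub
    have hinv : Real.arctan x⁻¹ = Real.pi/2 - Real.arctan x :=
      Real.arctan_inv_of_pos hx
    have harc2 : Real.arctan x < Real.pi/2 - Real.pi^2 * x⁻¹ / 12 := by
      rw [hinv] at harc; linarith
    have hepos : 0 < Real.exp t - 1 := by
      have := Real.add_one_lt_exp ht.ne'
      linarith
    have hxa : x - Real.pi/2 + Real.pi^2 * x⁻¹/12 < x - Real.arctan x := by linarith
    have hchain : (Real.exp t - 1) * (x - Real.pi/2 + Real.pi^2 * x⁻¹/12)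
        < (Real.exp t - 1) * (x - Real.arctan x) :=
      mul_lt_mul_of_pos_left hxa hepos
    have hxne : x ≠ 0 := hx.ne'
    have e2 : x - Real.pi/2 + Real.pi^2 * x⁻¹/12 = (12 - 6*t + t^2) * x / 12 := by
      rw [htdef]
      field_simp
      ring
    have e3 : t * x = Real.pi := by
      rw [htdef]; field_simp
    have hm := mul_lt_mul_of_pos_right hkey hx
    have hfin : Real.pi < (Real.exp t - 1) * (x - Real.pi/2 + Real.pi^2 * x⁻¹/12) := by
      rw [e2]
      nlinarith [hm, e3]
    linarith
end

section
/- For every y > 0 one has (1/π)·arctan(π/y) + 1/(y + y²/2 + y³/6 + y⁴/24) - 1/y < 0. -/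
open Real

lemma aux_up (t : ℝ) (ht : 0 < t) :
    Real.arctan t < t*(15+4*t^2)/(15+9*t^2) := by
  set g : ℝ → ℝ := fun x => x*(15+4*x^2)/(15+9*x^2) - Real.arctan x with hg
  have hden : ∀ x : ℝ, (15:ℝ)+9*x^2 ≠ 0 := fun x => by positivity
  have hder : ∀ x : ℝ, HasDerivAt g
      (((15+12*x^2)*(15+9*x^2) - x*(15+4*x^2)*(18*x))/(15+9*x^2)^2 - 1/(1+x^2)) x := by
    intro x
    have h1 : HasDerivAt (fun x : ℝ => x*(15+4*x^2)) (15+12*x^2) x := by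
      have := (hasDerivAt_id x).mul (((hasDerivAt_pow 2 x).const_mul (4:ℝ)).const_add 15)
      refine this.congr_deriv ?_
      simp [id_eq]
      ring
    have h2 : HasDerivAt (fun x : ℝ => (15:ℝ)+9*x^2) (18*x) x := by
      have := ((hasDerivAt_pow 2 x).const_mul (9:ℝ)).const_add 15
      refine this.congr_deriv ?_
      simp
      ring
    exact (h1.div h2 (hden x)).sub (Real.hasDerivAt_arctan x)
  have hmono : StrictMonoOn g (Set.Ici 0) := by
    apply strictMonoOn_of_deriv_pos (convex_Ici 0)
    · have : Continuous g := by
        apply Continuous.sub _ Real.continuous_arctan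
        exact (continuous_id.mul (by continuity)).div (by continuity) hden
      exact this.continuousOn
    · intro x hx
      rw [interior_Ici] at hx
      have hx' : (0:ℝ) < x := hx
      rw [(hder x).deriv]
      rw [div_sub_div _ _ (by positivity : ((15:ℝ)+9*x^2)^2 ≠ 0) (by positivity : (1:ℝ)+x^2 ≠ 0)]
      apply div_pos
      · nlinarith [pow_pos hx' 6]
      · positivity
  have h0 : g 0 = 0 := by simp [hg]
  have := hmono (Set.self_mem_Ici) (Set.mem_Ici.mpr ht.le) ht
  rw [h0] at this
  simp only [hg] at this
  linarith

lemma aux_low (t : ℝ) (ht : 0 < t) :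
    3*t/(3+t^2) < Real.arctan t := by
  set g : ℝ → ℝ := fun x => Real.arctan x - 3*x/(3+x^2) with hg
  have hden : ∀ x : ℝ, (3:ℝ)+x^2 ≠ 0 := fun x => by positivity
  have hder : ∀ x : ℝ, HasDerivAt g
      (1/(1+x^2) - (3*(3+x^2) - 3*x*(2*x))/(3+x^2)^2) x := by
    intro x
    have h1 : HasDerivAt (fun x : ℝ => 3*x) 3 x := by
      simpa using (hasDerivAt_id x).const_mul (3:ℝ)
    have h2 : HasDerivAt (fun x : ℝ => (3:ℝ)+x^2) (2*x) x := by
      have := (hasDerivAt_pow 2 x).const_add (3:ℝ)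
      refine this.congr_deriv ?_
      norm_num
    exact (Real.hasDerivAt_arctan x).sub (h1.div h2 (hden x))
  have hmono : StrictMonoOn g (Set.Ici 0) := by
    apply strictMonoOn_of_deriv_pos (convex_Ici 0)
    · have : Continuous g := by
        apply Real.continuous_arctan.sub
        exact (by continuity : Continuous fun x : ℝ => 3*x).div (by continuity) hden
      exact this.continuousOn
    · intro x hx
      rw [interior_Ici] at hx
      have hx' : (0:ℝ) < x := hx
      rw [(hder x).deriv]
      rw [div_sub_div _ _ (by positivity : (1:ℝ)+x^2 ≠ 0) (by positivity : ((3:ℝ)+x^2)^2 ≠ 0)]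
      apply div_pos
      · nlinarith [pow_pos hx' 4]
      · positivity
  have h0 : g 0 = 0 := by simp [hg]
  have := hmono (Set.self_mem_Ici) (Set.mem_Ici.mpr ht.le) ht
  rw [h0] at this
  simp only [hg] at this
  linarith

theorem stmt_10 (y : ℝ) (hy : 0 < y) :
    (1/Real.pi) * Real.arctan (Real.pi/y)
      + 1/(y + y^2/2 + y^3/6 + y^4/24) - 1/y < 0 := by
  have hpi := Real.pi_pos
  have hp1 : (3.1415:ℝ) < Real.pi := by
    have := Real.pi_gt_d6; linarith
  have hp2 : Real.pi < 3.1416 := by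
    have := Real.pi_lt_d6; linarith
  have hD : (0:ℝ) < y^3+4*y^2+12*y+24 := by positivity
  have key : Real.arctan (Real.pi/y)
      < Real.pi * ((y^2+4*y+12)/(y^3+4*y^2+12*y+24)) := by
    have hpsq1 : (9.86:ℝ) < Real.pi^2 := by nlinarith
    have hpsq2 : Real.pi^2 < (9.8697:ℝ) := by nlinarith
    rcases le_or_gt y (5/2) with hle | hgt
    · -- small y: arctan(π/y) = π/2 - arctan(y/π) < π/2 - 3πy/(3π²+y²)
      have harc : Real.arctan (Real.pi/y) = Real.pi/2 - Real.arctan (y/Real.pi) := by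
        rw [← Real.arctan_inv_of_pos (by positivity : 0 < y/Real.pi)]
        congr 1
        field_simp
      have h1 := aux_low (y/Real.pi) (by positivity)
      have heq : 3*(y/Real.pi)/(3+(y/Real.pi)^2) = 3*Real.pi*y/(3*Real.pi^2+y^2) := by
        rw [div_eq_div_iff (by positivity) (by positivity)]
        field_simp
      rw [heq] at h1
      have key2 : (3*Real.pi^2+y^2-6*y)*(y^3+4*y^2+12*y+24)
          < (y^2+4*y+12)*(2*(3*Real.pi^2+y^2)) := by
        nlinarith [sq_nonneg y, sq_nonneg (y-1), sq_nonneg (y-2), mul_pos hy hy,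
          mul_pos (mul_pos hy hy) hy, sq_nonneg (y*(y-2)), mul_pos (mul_pos hy hy) (mul_pos hy hy)]
      have hfrac : (3*Real.pi^2+y^2-6*y)/(2*(3*Real.pi^2+y^2))
          < (y^2+4*y+12)/(y^3+4*y^2+12*y+24) := by
        rw [div_lt_div_iff₀ (by positivity) hD]
        linarith [key2]
      have hmul := mul_lt_mul_of_pos_left hfrac hpi
      have hA : Real.pi/2 - 3*Real.pi*y/(3*Real.pi^2+y^2)
          = Real.pi*((3*Real.pi^2+y^2-6*y)/(2*(3*Real.pi^2+y^2))) := by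
        field_simp
        ring
      linarith [harc, h1, hA ▸ hmul]
    · -- large y
      have h1 := aux_up (Real.pi/y) (by positivity)
      have heq : (Real.pi/y)*(15+4*(Real.pi/y)^2)/(15+9*(Real.pi/y)^2)
          = Real.pi*((15*y^2+4*Real.pi^2)/(y*(15*y^2+9*Real.pi^2))) := by
        have h9 : (15:ℝ)+9*(Real.pi/y)^2 ≠ 0 := by positivity
        have hY : y*(15*y^2+9*Real.pi^2) ≠ 0 := by positivity
        field_simp
      rw [heq] at h1
      have key2 : (15*y^2+4*Real.pi^2)*(y^3+4*y^2+12*y+24)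
          < (y^2+4*y+12)*(y*(15*y^2+9*Real.pi^2)) := by
        nlinarith [mul_pos hy hy, sq_nonneg (y-5/2), mul_pos (mul_pos hy hy) hy]
      have hfrac : (15*y^2+4*Real.pi^2)/(y*(15*y^2+9*Real.pi^2))
          < (y^2+4*y+12)/(y^3+4*y^2+12*y+24) := by
        rw [div_lt_div_iff₀ (by positivity) hD]
        linarith [key2]
      have hmul := mul_lt_mul_of_pos_left hfrac hpi
      linarith
  have hS : (0:ℝ) < y + y^2/2 + y^3/6 + y^4/24 := by positivity
  have hQ : (y^2+4*y+12)/(y^3+4*y^2+12*y+24)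
      = 1/y - 1/(y + y^2/2 + y^3/6 + y^4/24) := by
    rw [div_sub_div _ _ (ne_of_gt hy) (ne_of_gt hS), div_eq_div_iff hD.ne' (by positivity)]
    ring
  have h2 : (1/Real.pi) * Real.arctan (Real.pi/y)
      < (y^2+4*y+12)/(y^3+4*y^2+12*y+24) := by
    have h3 := mul_lt_mul_of_pos_left key (by positivity : (0:ℝ) < 1/Real.pi)
    have h4 : (1/Real.pi) * (Real.pi * ((y^2+4*y+12)/(y^3+4*y^2+12*y+24)))
        = (y^2+4*y+12)/(y^3+4*y^2+12*y+24) := by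
      field_simp
    linarith [h4 ▸ h3]
  linarith [h2, hQ]
end

section
/- Let b, c > 0 with c² < 4b, set γ = c/2 and δ = √(b - c²/4). For f ∈ L^∞(ℝ,ℝ), define u(t) = (1/δ)·∫₀^∞ e^{-γs} sin(δs) f(t-s) ds. Then u'(0) = ∫₀^∞ e^{-γs}(cos(δs) - (γ/δ) sin(δs)) f(-s) ds. -/
open MeasureTheory Real

lemma exp_mul_integrableOn_Iic' {γ : ℝ} (hγ : 0 < γ) (t : ℝ) :
    IntegrableOn (fun r => Real.exp (γ * r)) (Set.Iic t) := by
  have key := (Measure.measurePreserving_neg (volume : Measure ℝ)).integrableOn_comp_preimage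
      (Homeomorph.neg ℝ).measurableEmbedding
      (f := fun r => Real.exp (γ * r)) (s := Set.Iic t)
  rw [← key]
  simp only [Function.comp_def, Set.neg_preimage, Set.neg_Iic]
  have h1 : IntegrableOn (fun x : ℝ => Real.exp (-γ * x)) (Set.Ioi (-t - 1)) :=
    exp_neg_integrableOn_Ioi _ hγ
  have h2 : IntegrableOn (fun x : ℝ => Real.exp (-γ * x)) (Set.Ici (-t)) :=
    h1.mono_set (Set.Ici_subset_Ioi.mpr (by linarith))
  exact h2.congr_fun (fun x _ => by ring_nf) measurableSet_Ici

lemma int_aux' {γ M : ℝ} (hγ : 0 < γ) {f : ℝ → ℝ} (hf : Measurable f)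
    (hMf : ∀ᵐ t ∂(volume : Measure ℝ), |f t| ≤ M) {k : ℝ → ℝ} (hk : Measurable k)
    (hk1 : ∀ r, |k r| ≤ 1) (t : ℝ) :
    IntegrableOn (fun r => Real.exp (γ*r) * k r * f r) (Set.Iic t) := by
  refine Integrable.mono' ((exp_mul_integrableOn_Iic' hγ t).const_mul M)
    (((Real.measurable_exp.comp (measurable_const.mul measurable_id)).mul hk).mul
      hf).aestronglyMeasurable ?_
  filter_upwards [ae_restrict_of_ae hMf] with r hr
  have h0 : (0:ℝ) < Real.exp (γ * r) := Real.exp_pos _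
  have := hk1 r
  rw [Real.norm_eq_abs, abs_mul, abs_mul, abs_exp]
  calc Real.exp (γ*r) * |k r| * |f r| ≤ Real.exp (γ*r) * 1 * M := by
        apply mul_le_mul _ hr (abs_nonneg _)
        · nlinarith
        · nlinarith [abs_nonneg (f r)]
    _ = M * Real.exp (γ*r) := by ring

lemma key_deriv' {P A : ℝ → ℝ} {p : ℝ} (hP : HasDerivAt P p 0)
    (ho : (fun t => P t * (A t - A 0)) =o[nhds 0] (fun t => t)) :
    HasDerivAt (fun t => P t * A t) (p * A 0) 0 := by
  rw [hasDerivAt_iff_isLittleO] at hP ⊢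
  have h1 : (fun t => (P t - P 0 - (t - 0) • p) * A 0) =o[nhds 0] (fun t : ℝ => t - 0) := by
    simpa [mul_comm] using hP.const_mul_left (A 0)
  have ho' : (fun t => P t * (A t - A 0)) =o[nhds 0] (fun t : ℝ => t - 0) := by
    simpa using ho
  have h2 := h1.add ho'
  refine h2.congr' ?_ (Filter.EventuallyEq.refl _ _)
  filter_upwards with t
  simp only [smul_eq_mul]
  ring

theorem stmt_17 (b c : ℝ) (hb : 0 < b) (hc : 0 < c) (h : c^2 < 4*b)
    (γ δ : ℝ) (hγ : γ = c/2) (hδ : δ = Real.sqrt (b - c^2/4))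
    (f : ℝ → ℝ) (hf : Measurable f) (M : ℝ)
    (hM : ∀ᵐ t ∂(volume : Measure ℝ), |f t| ≤ M)
    (u : ℝ → ℝ)
    (hu : ∀ t, u t = (1/δ) *
      ∫ s in Set.Ioi (0:ℝ), Real.exp (-γ*s) * Real.sin (δ*s) * f (t-s)) :
    deriv u 0 =
      ∫ s in Set.Ioi (0:ℝ),
        Real.exp (-γ*s) * (Real.cos (δ*s) - (γ/δ) * Real.sin (δ*s)) * f (-s) := by
  have hγpos : 0 < γ := by rw [hγ]; positivity
  have hδpos : 0 < δ := by
    rw [hδ]; exact Real.sqrt_pos.mpr (by nlinarith)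
  have hδne : δ ≠ 0 := ne_of_gt hδpos
  have hM0 : 0 ≤ M := by
    obtain ⟨t, ht⟩ := hM.exists
    linarith [abs_nonneg (f t)]
  set φc : ℝ → ℝ := fun r => Real.exp (γ*r) * Real.cos (δ*r) * f r with hφc
  set φs : ℝ → ℝ := fun r => Real.exp (γ*r) * Real.sin (δ*r) * f r with hφs
  have hIc : ∀ t, IntegrableOn φc (Set.Iic t) :=
    int_aux' hγpos hf hM (Real.measurable_cos.comp (measurable_const.mul measurable_id))
      (fun r => Real.abs_cos_le_one _)
  have hIs : ∀ t, IntegrableOn φs (Set.Iic t) :=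
    int_aux' hγpos hf hM (Real.measurable_sin.comp (measurable_const.mul measurable_id))
      (fun r => Real.abs_sin_le_one _)
  set A : ℝ → ℝ := fun t => ∫ r in Set.Iic t, φc r with hA
  set B : ℝ → ℝ := fun t => ∫ r in Set.Iic t, φs r with hB
  -- rewrite u
  have hu' : u = fun t => (1/δ) * (Real.exp (-γ*t) * Real.sin (δ*t) * A t
      - Real.exp (-γ*t) * Real.cos (δ*t) * B t) := by
    funext t
    rw [hu t]
    congr 1
    have key := (Measure.measurePreserving_sub_left (volume : Measure ℝ) t).setIntegral_preimage_emb
        (MeasurableEquiv.subLeft t).measurableEmbedding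
        (fun r => Real.exp (-γ*(t-r)) * Real.sin (δ*(t-r)) * f r) (Set.Iio t)
    have hpre : (fun x : ℝ => t - x) ⁻¹' Set.Iio t = Set.Ioi 0 := by
      ext x; simp [sub_lt_iff_lt_add]
    rw [hpre] at key
    have step1 : (∫ s in Set.Ioi (0:ℝ), Real.exp (-γ*s) * Real.sin (δ*s) * f (t-s)) =
        ∫ r in Set.Iic t, Real.exp (-γ*(t-r)) * Real.sin (δ*(t-r)) * f r := by
      rw [← setIntegral_congr_set Iio_ae_eq_Iic, ← key]
      refine setIntegral_congr_fun measurableSet_Ioi fun s _ => ?_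
      simp [sub_sub_cancel]
    rw [step1]
    have step2 : (∫ r in Set.Iic t, Real.exp (-γ*(t-r)) * Real.sin (δ*(t-r)) * f r) =
        ∫ r in Set.Iic t, ((Real.exp (-γ*t) * Real.sin (δ*t)) * φc r
          - (Real.exp (-γ*t) * Real.cos (δ*t)) * φs r) := by
      refine setIntegral_congr_fun measurableSet_Iic fun r _ => ?_
      rw [show -γ*(t-r) = -γ*t + γ*r by ring, Real.exp_add,
          show δ*(t-r) = δ*t - δ*r by ring, Real.sin_sub, hφc, hφs]
      ring
    rw [step2, integral_sub ((hIc t).const_mul _) ((hIs t).const_mul _),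
      integral_const_mul, integral_const_mul]
  -- Lipschitz-type bounds
  have habs : ∀ t x : ℝ, x ∈ Set.Ioc (min 0 t) (max 0 t) → |x| ≤ |t| ∧ x ≤ |t| := by
    intro t x hx
    rcases le_total 0 t with h'|h'
    · rw [min_eq_left h', max_eq_right h'] at hx
      rw [abs_of_nonneg (le_of_lt hx.1), abs_of_nonneg h']
      exact ⟨hx.2, hx.2⟩
    · rw [min_eq_right h', max_eq_left h'] at hx
      rw [abs_of_nonpos (hx.2), abs_of_nonpos h']
      constructor <;> linarith [hx.1, hx.2]
  have hA_lip : ∀ t : ℝ, |t| ≤ 1 → |A t - A 0| ≤ (Real.exp γ * M) * |t| := by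
    intro t ht
    have hdiff : A t - A 0 = ∫ x in (0:ℝ)..t, φc x :=
      intervalIntegral.integral_Iic_sub_Iic (hIc 0) (hIc t)
    rw [hdiff]
    have := intervalIntegral.norm_integral_le_of_norm_le_const_ae
      (f := φc) (a := 0) (b := t) (C := Real.exp γ * M) ?_
    · simpa [Real.norm_eq_abs] using this
    · filter_upwards [hM] with x hx hmem
      obtain ⟨hx1, hx2⟩ := habs t x hmem
      have hx3 : x ≤ 1 := le_trans hx2 ht
      have he : Real.exp (γ * x) ≤ Real.exp γ := by
        rw [Real.exp_le_exp]; nlinarith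
      rw [Real.norm_eq_abs, hφc, abs_mul, abs_mul, abs_exp]
      have h1 : |Real.cos (δ*x)| ≤ 1 := Real.abs_cos_le_one _
      have h2 : (0:ℝ) < Real.exp (γ*x) := Real.exp_pos _
      have s1 : Real.exp (γ*x) * |Real.cos (δ*x)| ≤ Real.exp γ :=
        (mul_le_mul_of_nonneg_left h1 h2.le).trans (by rw [mul_one]; exact he)
      exact mul_le_mul s1 hx (abs_nonneg _) (Real.exp_pos γ).le
  have hB_sq : ∀ t : ℝ, |t| ≤ 1 → |B t - B 0| ≤ (Real.exp γ * M * δ) * (|t| * |t|) := by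
    intro t ht
    have hdiff : B t - B 0 = ∫ x in (0:ℝ)..t, φs x :=
      intervalIntegral.integral_Iic_sub_Iic (hIs 0) (hIs t)
    rw [hdiff]
    have := intervalIntegral.norm_integral_le_of_norm_le_const_ae
      (f := φs) (a := 0) (b := t) (C := Real.exp γ * M * δ * |t|) ?_
    · rw [Real.norm_eq_abs] at this
      calc |∫ x in (0:ℝ)..t, φs x| ≤ Real.exp γ * M * δ * |t| * |t - 0| := this
        _ = (Real.exp γ * M * δ) * (|t| * |t|) := by rw [sub_zero]; ring
    · filter_upwards [hM] with x hx hmem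
      obtain ⟨hx1, hx2⟩ := habs t x hmem
      have hx3 : x ≤ 1 := le_trans hx2 ht
      have he : Real.exp (γ * x) ≤ Real.exp γ := by
        rw [Real.exp_le_exp]; nlinarith
      rw [Real.norm_eq_abs, hφs, abs_mul, abs_mul, abs_exp]
      have h1 : |Real.sin (δ*x)| ≤ |δ*x| := Real.abs_sin_le_abs
      have h4 : |δ*x| ≤ δ * |t| := by
        rw [abs_mul, abs_of_pos hδpos]
        nlinarith
      have h2 : (0:ℝ) < Real.exp (γ*x) := Real.exp_pos _
      have h5 : Real.exp (γ*x) * |Real.sin (δ*x)| ≤ Real.exp (γ*x) * |δ*x| :=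
        mul_le_mul_of_nonneg_left h1 h2.le
      have h6 : Real.exp (γ*x) * |δ*x| ≤ Real.exp γ * (δ*|t|) :=
        mul_le_mul he h4 (abs_nonneg _) (Real.exp_pos γ).le
      calc Real.exp (γ*x) * |Real.sin (δ*x)| * |f x|
          ≤ (Real.exp γ * (δ*|t|)) * M :=
            mul_le_mul (h5.trans h6) hx (abs_nonneg _) (by positivity)
        _ = Real.exp γ * M * δ * |t| := by ring
  -- eventual smallness filter
  have hev1 : ∀ᶠ t : ℝ in nhds 0, |t| ≤ 1 := by
    filter_upwards [Metric.closedBall_mem_nhds (0:ℝ) one_pos] with t ht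
    simpa [Real.dist_eq] using ht
  have hsq_littleo : (fun t : ℝ => t * t) =o[nhds 0] fun t : ℝ => t := by
    have h1 : (fun t : ℝ => t) =o[nhds 0] (fun _ : ℝ => (1:ℝ)) :=
      (Asymptotics.isLittleO_one_iff ℝ).mpr (by exact Filter.tendsto_id (x := nhds (0:ℝ)))
    simpa using h1.mul_isBigO (Asymptotics.isBigO_refl (fun t : ℝ => t) (nhds 0))
  -- derivatives of the trig factors
  have hlin : ∀ a : ℝ, HasDerivAt (fun t : ℝ => a * t) a 0 := by
    intro a
    simpa using (hasDerivAt_id (0:ℝ)).const_mul a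
  have hPd : HasDerivAt (fun t => Real.exp (-γ*t) * Real.sin (δ*t)) δ 0 := by
    have := ((hlin (-γ)).exp).mul ((hlin δ).sin)
    simpa [Pi.mul_def] using this
  have hQd : HasDerivAt (fun t => Real.exp (-γ*t) * Real.cos (δ*t)) (-γ) 0 := by
    have := ((hlin (-γ)).exp).mul ((hlin δ).cos)
    simpa [Pi.mul_def] using this
  -- little-o facts
  have hoF : (fun t => Real.exp (-γ*t) * Real.sin (δ*t) * (A t - A 0)) =o[nhds 0]
      (fun t : ℝ => t) := by
    refine (Asymptotics.IsBigO.trans_isLittleO ?_ hsq_littleo)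
    have hP0 : (fun t => Real.exp (-γ*t) * Real.sin (δ*t)) =O[nhds 0] fun t : ℝ => t := by
      have := hPd.isBigO_sub
      simpa using this
    have hA0 : (fun t => A t - A 0) =O[nhds 0] fun t : ℝ => t := by
      refine Asymptotics.isBigO_iff.mpr ⟨Real.exp γ * M, ?_⟩
      filter_upwards [hev1] with t ht
      simpa [Real.norm_eq_abs] using hA_lip t ht
    exact hP0.mul hA0
  have hoG : (fun t => Real.exp (-γ*t) * Real.cos (δ*t) * (B t - B 0)) =o[nhds 0]
      (fun t : ℝ => t) := by
    refine (Asymptotics.IsBigO.trans_isLittleO ?_ hsq_littleo)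
    have hQ0 : (fun t => Real.exp (-γ*t) * Real.cos (δ*t)) =O[nhds 0] fun _ : ℝ => (1:ℝ) := by
      refine Filter.Tendsto.isBigO_one _ (c := Real.exp 0 * Real.cos 0) ?_
      exact (Real.continuous_exp.comp (continuous_const.mul continuous_id)).tendsto' 0 _ (by simp)
        |>.mul ((Real.continuous_cos.comp (continuous_const.mul continuous_id)).tendsto' 0 _
          (by simp))
    have hB0 : (fun t => B t - B 0) =O[nhds 0] fun t : ℝ => t * t := by
      refine Asymptotics.isBigO_iff.mpr ⟨Real.exp γ * M * δ, ?_⟩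
      filter_upwards [hev1] with t ht
      simpa [Real.norm_eq_abs, abs_mul] using hB_sq t ht
    simpa using hQ0.mul hB0
  -- assemble derivative of u
  have hFd : HasDerivAt (fun t => Real.exp (-γ*t) * Real.sin (δ*t) * A t) (δ * A 0) 0 :=
    key_deriv' hPd hoF
  have hGd : HasDerivAt (fun t => Real.exp (-γ*t) * Real.cos (δ*t) * B t) (-γ * B 0) 0 :=
    key_deriv' hQd hoG
  have hud : HasDerivAt u ((1/δ) * (δ * A 0 - (-γ * B 0))) 0 := by
    rw [hu']
    exact (hFd.sub hGd).const_mul (1/δ)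
  rw [hud.deriv]
  -- compute the RHS
  have key := (Measure.measurePreserving_neg (volume : Measure ℝ)).setIntegral_preimage_emb
      (Homeomorph.neg ℝ).measurableEmbedding
      (fun r => Real.exp (γ*r) * (Real.cos (δ*r) + (γ/δ) * Real.sin (δ*r)) * f r) (Set.Iio 0)
  have hpre : (Neg.neg : ℝ → ℝ) ⁻¹' Set.Iio 0 = Set.Ioi 0 := by ext x; simp
  rw [hpre] at key
  have hrhs : (∫ s in Set.Ioi (0:ℝ),
      Real.exp (-γ*s) * (Real.cos (δ*s) - (γ/δ) * Real.sin (δ*s)) * f (-s)) =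
      ∫ r in Set.Iic (0:ℝ), Real.exp (γ*r) * (Real.cos (δ*r) + (γ/δ) * Real.sin (δ*r)) * f r := by
    rw [← setIntegral_congr_set Iio_ae_eq_Iic, ← key]
    refine setIntegral_congr_fun measurableSet_Ioi fun s _ => ?_
    simp only [mul_neg, Real.cos_neg, Real.sin_neg, neg_mul]
    ring_nf
  rw [hrhs]
  have hsplit : (∫ r in Set.Iic (0:ℝ),
      Real.exp (γ*r) * (Real.cos (δ*r) + (γ/δ) * Real.sin (δ*r)) * f r) =
      A 0 + (γ/δ) * B 0 := by
    have step : (∫ r in Set.Iic (0:ℝ),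
        Real.exp (γ*r) * (Real.cos (δ*r) + (γ/δ) * Real.sin (δ*r)) * f r) =
        ∫ r in Set.Iic (0:ℝ), (φc r + (γ/δ) * φs r) := by
      refine setIntegral_congr_fun measurableSet_Iic fun r _ => ?_
      rw [hφc, hφs]; ring
    rw [step, integral_add (hIc 0) ((hIs 0).const_mul _), integral_const_mul]
  rw [hsplit]
  field_simp
  ring
end
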